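/- arXiv:2108.10522 — 5 statements merged into one kernel-verified Lean document; each statement's English description precedes it below -/
import Mathlib

section
/- On a non-degenerate triangle T with barycentric coordinates λ1, λ2, λ3, the space P^{2-}(T) := P1(T)^2 ⊕ span{λi λj t_k : {i,j,k}={1,2,3}} (t_k the unit tangent of edge e_k) coincides with the space of vector-valued quadratic polynomials on T whose normal component on each edge e_i of T is a polynomial of degree at most 1 along that edge. -/
open MeasureTheory
open scoped Classical

noncomputable section

/-- The plane. -/
abbrev V2 : Type := ℝ × ℝ

/-- Euclidean dot product on the plane. -/
def dot2 (u v : V2) : ℝ := u.1 * v.1 + u.2 * v.2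

/-- 2D cross product. -/
def cross2 (u v : V2) : ℝ := u.1 * v.2 - u.2 * v.1

/-- Euclidean norm on the plane. -/
def enorm2 (u : V2) : ℝ := Real.sqrt (u.1 ^ 2 + u.2 ^ 2)

/-- `f` is (the restriction of) a polynomial of total degree at most `k`. -/
def IsPolyDeg (k : ℕ) (f : V2 → ℝ) : Prop :=
  ∃ p : MvPolynomial (Fin 2) ℝ, p.totalDegree ≤ k ∧
    ∀ x : V2, f x = MvPolynomial.eval (fun i : Fin 2 => if i = 0 then x.1 else x.2) p

/-- A vector field whose two components are polynomials of degree at most `k`. -/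
def IsVPolyDeg (k : ℕ) (v : V2 → V2) : Prop :=
  IsPolyDeg k (fun x => (v x).1) ∧ IsPolyDeg k (fun x => (v x).2)

/-- partial derivative in the `x` direction -/
def pd1 (f : V2 → ℝ) (x : V2) : ℝ := fderiv ℝ f x (1, 0)

/-- partial derivative in the `y` direction -/
def pd2 (f : V2 → ℝ) (x : V2) : ℝ := fderiv ℝ f x (0, 1)

/-- `curl` of a scalar function: `(∂w/∂y, -∂w/∂x)`. -/
def curl2 (w : V2 → ℝ) : V2 → V2 := fun x => (pd2 w x, - pd1 w x)

/-- divergence of a planar vector field -/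
def div2 (v : V2 → V2) (x : V2) : ℝ :=
  pd1 (fun y => (v y).1) x + pd2 (fun y => (v y).2) x

/-- Parametrization of the segment from `p` to `q`. -/
def seg (p q : V2) (s : ℝ) : V2 := p + s • (q - p)

/-- A non-degenerate triangle, together with its barycentric coordinates `lam i`,
unit outward normals `nrm i` and unit tangents `tang i` of the edges `e i`
(the edge `e i` being opposite the vertex `a i`, joining `a (i+1)` and `a (i+2)`),
oriented so that `nrm i × tang i > 0`. -/
structure Triangle where
  a : Fin 3 → V2
  indep : AffineIndependent ℝ a
  lam : Fin 3 → V2 → ℝ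
  lam_affine : ∀ i, ∃ (L : V2 →ₗ[ℝ] ℝ) (c : ℝ), ∀ x, lam i x = L x + c
  lam_apply : ∀ i j, lam i (a j) = if i = j then (1 : ℝ) else 0
  nrm : Fin 3 → V2
  tang : Fin 3 → V2
  nrm_unit : ∀ i, enorm2 (nrm i) = 1
  tang_unit : ∀ i, enorm2 (tang i) = 1
  tang_parallel : ∀ i, ∃ c : ℝ, a (i + 2) - a (i + 1) = c • tang i
  nrm_orth : ∀ i, dot2 (nrm i) (tang i) = 0
  nrm_outward : ∀ i, dot2 (nrm i) (a i - a (i + 1)) < 0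
  orient : ∀ i, 0 < cross2 (nrm i) (tang i)

/-- The (closed) triangle as a subset of the plane. -/
def triSet (T : Triangle) : Set V2 := convexHull ℝ (Set.range T.a)

/-- Parametrization of the edge `e i` of `T` (from `a (i+1)` to `a (i+2)`). -/
def epara (T : Triangle) (i : Fin 3) (s : ℝ) : V2 := seg (T.a (i + 1)) (T.a (i + 2)) s

/-- Length of edge `e i`. -/
def elen (T : Triangle) (i : Fin 3) : ℝ := enorm2 (T.a (i + 2) - T.a (i + 1))

/-- Area of the triangle. -/
def areaT (T : Triangle) : ℝ := |cross2 (T.a 1 - T.a 0) (T.a 2 - T.a 0)| / 2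

/-- The normal component of `v` on each edge of `T` is a polynomial of degree at
most one along that edge. -/
def NormalP1 (T : Triangle) (v : V2 → V2) : Prop :=
  ∀ i : Fin 3, ∃ α β : ℝ, ∀ s ∈ Set.Icc (0 : ℝ) 1,
    dot2 (v (epara T i s)) (T.nrm i) = α + β * s

/-- Membership in `P^{2-}(T)`: vector-valued quadratic polynomials whose normal
components on the edges are of degree at most one. -/
def memP2m (T : Triangle) (v : V2 → V2) : Prop := IsVPolyDeg 2 v ∧ NormalP1 T v

/-! Each bubble `λ_{k+1} λ_{k+2} t_k` vanishes on the edges `e_i`, `i ≠ k`, and is tangential on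
`e_k`, so adding bubbles to a linear field keeps its normal components affine along the edges.
Conversely, given `v ∈ P^{2-}(T)`, subtract the bubbles that cancel the `s²`-coefficient of the
tangential component `t_i · v` along each edge. The remainder is affine along all three edges, so
the quadratic part of each of its components vanishes in three pairwise independent directions,
hence is zero. The decomposition is unique because the bubbles vanish at the vertices, which
fixes the linear part, and equal `(c_k / 4) • t_k` at the midpoint of `e_k`. -/

def quadForm (A B C : ℝ) (u : V2) : ℝ := A * u.1 ^ 2 + B * (u.1 * u.2) + C * u.2 ^ 2

def AffineOnUnitInterval (g : ℝ → ℝ) : Prop :=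
  ∃ α β : ℝ, ∀ s ∈ Set.Icc (0 : ℝ) 1, g s = α + β * s

namespace IsPolyDeg

variable {k l : ℕ} {f g : V2 → ℝ}

theorem const (k : ℕ) (c : ℝ) : IsPolyDeg k fun _ => c :=
  ⟨MvPolynomial.C c, by simp, fun _ => by simp⟩

theorem fst : IsPolyDeg 1 fun x : V2 => x.1 :=
  ⟨MvPolynomial.X 0, by simp, fun _ => by simp⟩

theorem snd : IsPolyDeg 1 fun x : V2 => x.2 :=
  ⟨MvPolynomial.X 1, by simp, fun _ => by simp⟩

theorem mono (hkl : k ≤ l) (hf : IsPolyDeg k f) : IsPolyDeg l f :=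
  let ⟨p, hp, hpf⟩ := hf
  ⟨p, hp.trans hkl, hpf⟩

theorem add (hf : IsPolyDeg k f) (hg : IsPolyDeg k g) : IsPolyDeg k fun x => f x + g x :=
  let ⟨p, hp, hpf⟩ := hf
  let ⟨q, hq, hqg⟩ := hg
  ⟨p + q, (MvPolynomial.totalDegree_add p q).trans (max_le hp hq), fun x => by simp [hpf, hqg]⟩

theorem sub (hf : IsPolyDeg k f) (hg : IsPolyDeg k g) : IsPolyDeg k fun x => f x - g x :=
  let ⟨p, hp, hpf⟩ := hf
  let ⟨q, hq, hqg⟩ := hg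
  ⟨p - q, (MvPolynomial.totalDegree_sub p q).trans (max_le hp hq), fun x => by simp [hpf, hqg]⟩

theorem mul (hf : IsPolyDeg k f) (hg : IsPolyDeg l g) : IsPolyDeg (k + l) fun x => f x * g x :=
  let ⟨p, hp, hpf⟩ := hf
  let ⟨q, hq, hqg⟩ := hg
  ⟨p * q, (MvPolynomial.totalDegree_mul p q).trans (add_le_add hp hq), fun x => by simp [hpf, hqg]⟩

theorem const_mul (c : ℝ) (hf : IsPolyDeg k f) : IsPolyDeg k fun x => c * f x := by
  simpa using (const 0 c).mul hf

theorem mul_const (hf : IsPolyDeg k f) (c : ℝ) : IsPolyDeg k fun x => f x * c := by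
  simpa using hf.mul (const 0 c)

theorem sum {ι : Type*} (s : Finset ι) {f : ι → V2 → ℝ} (hf : ∀ i ∈ s, IsPolyDeg k (f i)) :
    IsPolyDeg k fun x => ∑ i ∈ s, f i x := by
  classical
  induction s using Finset.induction_on with
  | empty => simpa using const k 0
  | insert i s hi ih =>
    simp only [Finset.sum_insert hi]
    exact (hf i (s.mem_insert_self i)).add (ih fun j hj => hf j (Finset.mem_insert_of_mem hj))

theorem of_affine (a b c : ℝ) : IsPolyDeg 1 fun x : V2 => a * x.1 + b * x.2 + c :=
  ((fst.const_mul a).add (snd.const_mul b)).add (const 1 c)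

@[elab_as_elim]
theorem induction {P : (V2 → ℝ) → Prop} (zero : P fun _ => 0)
    (add : ∀ f g, P f → P g → P fun x => f x + g x)
    (monomial : ∀ (c : ℝ) (i j : ℕ), i + j ≤ k → P fun x => c * (x.1 ^ i * x.2 ^ j))
    (hf : IsPolyDeg k f) : P f := by
  obtain ⟨p, hp, hpf⟩ := hf
  have hsum : f = ∑ m ∈ p.support, fun x : V2 => p.coeff m * (x.1 ^ m 0 * x.2 ^ m 1) := by
    ext x
    simp [hpf, MvPolynomial.eval_eq', Fin.prod_univ_two]
  rw [hsum]
  refine Finset.sum_induction _ P add zero fun m hm => monomial _ _ _ ?_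
  have := MvPolynomial.le_totalDegree hm
  rw [Finsupp.sum_fintype _ _ fun _ => rfl, Fin.sum_univ_two] at this
  omega

theorem exists_affine (hf : IsPolyDeg 1 f) : ∃ a b c : ℝ, ∀ x, f x = a * x.1 + b * x.2 + c := by
  refine hf.induction ⟨0, 0, 0, fun _ => by ring⟩ ?_ ?_
  · rintro f g ⟨a, b, c, hf⟩ ⟨a', b', c', hg⟩
    exact ⟨a + a', b + b', c + c', fun x => by simp only [hf, hg]; ring⟩
  · intro c i j hij
    obtain ⟨rfl, rfl⟩ | ⟨rfl, rfl⟩ | ⟨rfl, rfl⟩ :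
        (i = 0 ∧ j = 0) ∨ (i = 1 ∧ j = 0) ∨ (i = 0 ∧ j = 1) := by
      omega
    · exact ⟨0, 0, c, fun _ => by ring⟩
    · exact ⟨c, 0, 0, fun _ => by ring⟩
    · exact ⟨0, c, 0, fun _ => by ring⟩

theorem exists_quadratic (hf : IsPolyDeg 2 f) :
    ∃ A B C D E F : ℝ, ∀ x, f x = quadForm A B C x + (D * x.1 + E * x.2 + F) := by
  refine hf.induction ⟨0, 0, 0, 0, 0, 0, fun _ => by simp [quadForm]⟩ ?_ ?_
  · rintro f g ⟨A, B, C, D, E, F, hf⟩ ⟨A', B', C', D', E', F', hg⟩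
    exact ⟨A + A', B + B', C + C', D + D', E + E', F + F', fun x => by
      simp only [hf, hg, quadForm]; ring⟩
  · intro c i j hij
    obtain ⟨rfl, rfl⟩ | ⟨rfl, rfl⟩ | ⟨rfl, rfl⟩ | ⟨rfl, rfl⟩ | ⟨rfl, rfl⟩ | ⟨rfl, rfl⟩ :
        (i = 0 ∧ j = 0) ∨ (i = 1 ∧ j = 0) ∨ (i = 0 ∧ j = 1) ∨ (i = 2 ∧ j = 0) ∨
          (i = 1 ∧ j = 1) ∨ (i = 0 ∧ j = 2) := by
      omega
    · exact ⟨0, 0, 0, 0, 0, c, fun _ => by simp only [quadForm]; ring⟩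
    · exact ⟨0, 0, 0, c, 0, 0, fun _ => by simp only [quadForm]; ring⟩
    · exact ⟨0, 0, 0, 0, c, 0, fun _ => by simp only [quadForm]; ring⟩
    · exact ⟨c, 0, 0, 0, 0, 0, fun _ => by simp only [quadForm]; ring⟩
    · exact ⟨0, c, 0, 0, 0, 0, fun _ => by simp only [quadForm]; ring⟩
    · exact ⟨0, 0, c, 0, 0, 0, fun _ => by simp only [quadForm]; ring⟩

theorem exists_affine_seg (hf : IsPolyDeg 1 f) (p q : V2) :
    ∃ α β : ℝ, ∀ s, f (seg p q s) = α + β * s := by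
  obtain ⟨a, b, c, hf⟩ := hf.exists_affine
  exact ⟨f p, a * (q - p).1 + b * (q - p).2, fun s => by
    simp only [hf, seg, Prod.fst_add, Prod.snd_add, Prod.smul_fst, Prod.smul_snd, smul_eq_mul]
    ring⟩

theorem exists_quadratic_seg (hf : IsPolyDeg 2 f) (p q : V2) :
    ∃ α β γ : ℝ, ∀ s, f (seg p q s) = α + β * s + γ * s ^ 2 := by
  obtain ⟨A, B, C, D, E, F, hf⟩ := hf.exists_quadratic
  refine ⟨f p, 2 * A * p.1 * (q - p).1 + B * (p.1 * (q - p).2 + p.2 * (q - p).1)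
      + 2 * C * p.2 * (q - p).2 + D * (q - p).1 + E * (q - p).2, quadForm A B C (q - p),
    fun s => ?_⟩
  simp only [hf, quadForm, seg, Prod.fst_add, Prod.snd_add, Prod.smul_fst, Prod.smul_snd,
    smul_eq_mul]
  ring

end IsPolyDeg

theorem quadForm_neg (A B C : ℝ) (u : V2) : quadForm A B C (-u) = quadForm A B C u := by
  simp only [quadForm, Prod.fst_neg, Prod.snd_neg]
  ring

-- The second difference at `0, 1/2, 1` is `quadForm A B C (q - p) / 2`.
theorem quadForm_eq_zero_of_affineOnUnitInterval {A B C D E F : ℝ} {p q : V2}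
    (h : AffineOnUnitInterval fun s =>
      quadForm A B C (seg p q s) + (D * (seg p q s).1 + E * (seg p q s).2 + F)) :
    quadForm A B C (q - p) = 0 := by
  obtain ⟨α, β, h⟩ := h
  have h0 := h 0 (by norm_num)
  have h1 := h 1 (by norm_num)
  have hhalf := h (1 / 2) (by norm_num)
  simp only [quadForm, seg, Prod.fst_add, Prod.snd_add, Prod.smul_fst, Prod.smul_snd,
    Prod.fst_sub, Prod.snd_sub, smul_eq_mul] at h0 h1 hhalf ⊢
  linear_combination 2 * h0 + 2 * h1 - 4 * hhalf

theorem linear_eq_zero_of_cross2_ne_zero {a b : ℝ} {d e : V2} (hde : cross2 d e ≠ 0)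
    (hd : a * d.1 + b * d.2 = 0) (he : a * e.1 + b * e.2 = 0) : a = 0 ∧ b = 0 := by
  unfold cross2 at hde
  have ha : a * (d.1 * e.2 - d.2 * e.1) = 0 := by linear_combination e.2 * hd - d.2 * he
  have hb : b * (d.1 * e.2 - d.2 * e.1) = 0 := by linear_combination d.1 * he - e.1 * hd
  exact ⟨(mul_eq_zero.mp ha).resolve_right hde, (mul_eq_zero.mp hb).resolve_right hde⟩

theorem quadForm_eq_zero_of_cross2_ne_zero {A B C : ℝ} {d e : V2} (hde : cross2 d e ≠ 0)
    (hd : quadForm A B C d = 0) (he : quadForm A B C e = 0)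
    (hde' : quadForm A B C (d + e) = 0) : A = 0 ∧ B = 0 ∧ C = 0 := by
  obtain ⟨x1, y1⟩ := d
  obtain ⟨x2, y2⟩ := e
  simp only [cross2, quadForm, Prod.fst_add, Prod.snd_add] at hde hd he hde'
  -- Cramer's rule: the system in `(A, B, C)` has determinant proportional to `(cross2 d e) ^ 3`.
  have hD : (x1 * y2 - y1 * x2) ^ 3 ≠ 0 := pow_ne_zero _ hde
  refine ⟨(mul_eq_zero.mp ?_).resolve_right hD, (mul_eq_zero.mp ?_).resolve_right hD,
    (mul_eq_zero.mp ?_).resolve_right hD⟩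
  · linear_combination (x1*y2^3 + x1*y1*y2^2 - y1*x2*y2^2 - y1^2*x2*y2) * hd
      + (x1*y1*y2^2 + x1*y1^2*y2 - y1^2*x2*y2 - y1^3*x2) * he
      + (y1^2*x2*y2 - x1*y1*y2^2) * hde'
  · linear_combination (2*y1*x2^2*y2 + y1^2*x2^2 - 2*x1*x2*y2^2 - x1^2*y2^2) * hd
      + (y1^2*x2^2 + 2*x1*y1^2*x2 - x1^2*y2^2 - 2*x1^2*y1*y2) * he
      + (x1^2*y2^2 - y1^2*x2^2) * hde'
  · linear_combination (x1*x2^2*y2 + x1^2*x2*y2 - y1*x2^3 - x1*y1*x2^2) * hd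
      + (x1^2*x2*y2 + x1^3*y2 - x1*y1*x2^2 - x1^2*y1*x2) * he
      + (x1*y1*x2^2 - x1^2*x2*y2) * hde'

theorem dot2_self_eq_one {u : V2} (hu : enorm2 u = 1) : dot2 u u = 1 := by
  rw [enorm2, Real.sqrt_eq_one] at hu
  rw [dot2]
  linear_combination hu

theorem eq_dot2_smul_add_dot2_smul {n t : V2} (hn : dot2 n n = 1) (ht : dot2 t t = 1)
    (hnt : dot2 n t = 0) (u : V2) : u = dot2 u n • n + dot2 u t • t := by
  obtain ⟨n1, n2⟩ := n
  obtain ⟨t1, t2⟩ := t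
  simp only [dot2] at hn ht hnt
  obtain ⟨D, hD⟩ : ∃ D, D = n1 * t2 - n2 * t1 := ⟨_, rfl⟩
  have hD2 : D ^ 2 = 1 := by
    rw [hD]; linear_combination (t1 * t1 + t2 * t2) * hn + ht - (n1 * t1 + n2 * t2) * hnt
  have h1 : t1 = -D * n2 := by rw [hD]; linear_combination n1 * hnt - t1 * hn
  have h2 : t2 = D * n1 := by rw [hD]; linear_combination n2 * hnt - t2 * hn
  subst h1 h2
  ext <;> simp only [dot2, Prod.smul_fst, Prod.smul_snd, smul_eq_mul, Prod.fst_add, Prod.snd_add]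
  · linear_combination -u.1 * hn - (u.1 * n2 ^ 2 - u.2 * n1 * n2) * hD2
  · linear_combination -u.2 * hn - (u.2 * n1 ^ 2 - u.1 * n1 * n2) * hD2

theorem cross2_ne_zero_of_linear {d e : V2} (L : V2 →ₗ[ℝ] ℝ) (hd : d ≠ 0) (hLd : L d = 0)
    (hLe : L e ≠ 0) : cross2 d e ≠ 0 := by
  intro h
  have coeff_eq_zero : ∀ r r' : ℝ, r • e = r' • d → r = 0 := fun r r' hrr' => by
    have := congrArg L hrr'
    rw [map_smul, map_smul, hLd, smul_zero, smul_eq_mul] at this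
    exact (mul_eq_zero.mp this).resolve_right hLe
  unfold cross2 at h
  apply hd
  ext
  · refine coeff_eq_zero _ e.1 (Prod.ext ?_ ?_) <;>
      simp only [Prod.smul_fst, Prod.smul_snd, smul_eq_mul]
    · ring
    · linear_combination h
  · refine coeff_eq_zero _ e.2 (Prod.ext ?_ ?_) <;>
      simp only [Prod.smul_fst, Prod.smul_snd, smul_eq_mul]
    · linear_combination -h
    · ring

namespace Triangle

variable (T : Triangle)

theorem lam_seg (j : Fin 3) (p q : V2) (s : ℝ) :
    T.lam j (seg p q s) = (1 - s) * T.lam j p + s * T.lam j q := by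
  obtain ⟨L, c, hL⟩ := T.lam_affine j
  simp only [hL, seg, map_add, map_smul, map_sub, smul_eq_mul]
  ring

theorem lam_mul_lam_epara (k i : Fin 3) (s : ℝ) :
    T.lam (k + 1) (epara T i s) * T.lam (k + 2) (epara T i s) =
      if k = i then (1 - s) * s else 0 := by
  simp only [epara, lam_seg, T.lam_apply]
  fin_cases k <;> fin_cases i <;> simp

theorem isPolyDeg_lam (i : Fin 3) : IsPolyDeg 1 (T.lam i) := by
  obtain ⟨L, c, hL⟩ := T.lam_affine i
  convert IsPolyDeg.of_affine (L (1, 0)) (L (0, 1)) c using 2 with x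
  have hx : x = x.1 • ((1, 0) : V2) + x.2 • ((0, 1) : V2) := by ext <;> simp
  rw [hL, hx, map_add, map_smul, map_smul, smul_eq_mul, smul_eq_mul]
  simp only [Prod.fst_add, Prod.snd_add, Prod.smul_fst, Prod.smul_snd, smul_eq_mul]
  ring

theorem vertex_eq_epara (j : Fin 3) : T.a j = epara T (j + 2) 0 := by
  simp only [epara, seg, zero_smul, add_zero]
  congr 1
  fin_cases j <;> rfl

theorem tang_ne_zero (i : Fin 3) : T.tang i ≠ 0 := fun h => by
  simpa [h, enorm2] using T.tang_unit i

theorem eq_dot2_nrm_smul_add_dot2_tang_smul (i : Fin 3) (u : V2) :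
    u = dot2 u (T.nrm i) • T.nrm i + dot2 u (T.tang i) • T.tang i :=
  eq_dot2_smul_add_dot2_smul (dot2_self_eq_one (T.nrm_unit i))
    (dot2_self_eq_one (T.tang_unit i)) (T.nrm_orth i) u

theorem affineOnUnitInterval_fst_and_snd (i : Fin 3) {u : ℝ → V2}
    (hn : AffineOnUnitInterval fun s => dot2 (u s) (T.nrm i))
    (ht : AffineOnUnitInterval fun s => dot2 (u s) (T.tang i)) :
    AffineOnUnitInterval (fun s => (u s).1) ∧ AffineOnUnitInterval (fun s => (u s).2) := by
  obtain ⟨αn, βn, hn⟩ := hn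
  obtain ⟨αt, βt, ht⟩ := ht
  beta_reduce at hn ht
  have hexp (s : ℝ) := T.eq_dot2_nrm_smul_add_dot2_tang_smul i (u s)
  constructor
  · refine ⟨αn * (T.nrm i).1 + αt * (T.tang i).1, βn * (T.nrm i).1 + βt * (T.tang i).1,
      fun s hs => ?_⟩
    show (u s).1 = _
    rw [hexp s]
    simp only [Prod.fst_add, Prod.smul_fst, smul_eq_mul, hn s hs, ht s hs]
    ring
  · refine ⟨αn * (T.nrm i).2 + αt * (T.tang i).2, βn * (T.nrm i).2 + βt * (T.tang i).2,
      fun s hs => ?_⟩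
    show (u s).2 = _
    rw [hexp s]
    simp only [Prod.snd_add, Prod.smul_snd, smul_eq_mul, hn s hs, ht s hs]
    ring

theorem cross2_edge_ne_zero : cross2 (T.a 2 - T.a 1) (T.a 0 - T.a 2) ≠ 0 := by
  obtain ⟨L, c, hL⟩ := T.lam_affine 0
  have hL_sub : ∀ j j' : Fin 3, L (T.a j - T.a j') = T.lam 0 (T.a j) - T.lam 0 (T.a j') :=
    fun j j' => by rw [map_sub, hL, hL]; ring
  refine cross2_ne_zero_of_linear L (sub_ne_zero.mpr (T.indep.injective.ne (by decide))) ?_ ?_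
  · simp [hL_sub, T.lam_apply]
  · simp [hL_sub, T.lam_apply]

theorem eq_of_isPolyDeg_one {f g : V2 → ℝ} (hf : IsPolyDeg 1 f) (hg : IsPolyDeg 1 g)
    (h : ∀ j, f (T.a j) = g (T.a j)) : f = g := by
  obtain ⟨a, b, c, hfg⟩ := (hf.sub hg).exists_affine
  have hv : ∀ j, a * (T.a j).1 + b * (T.a j).2 + c = 0 := fun j => by
    rw [← hfg, h j, sub_self]
  obtain ⟨rfl, rfl⟩ := linear_eq_zero_of_cross2_ne_zero (a := a) (b := b) T.cross2_edge_ne_zero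
    (by simp only [Prod.fst_sub, Prod.snd_sub]; linear_combination hv 2 - hv 1)
    (by simp only [Prod.fst_sub, Prod.snd_sub]; linear_combination hv 0 - hv 2)
  funext x
  linear_combination hfg x + hv 0

theorem isPolyDeg_one_of_affineOnUnitInterval_edges {f : V2 → ℝ}
    (hf : IsPolyDeg 2 f) (hedge : ∀ i, AffineOnUnitInterval fun s => f (epara T i s)) :
    IsPolyDeg 1 f := by
  obtain ⟨A, B, C, D, E, F, hf⟩ := hf.exists_quadratic
  have hQ (i : Fin 3) : quadForm A B C (T.a (i + 2) - T.a (i + 1)) = 0 :=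
    quadForm_eq_zero_of_affineOnUnitInterval (by simpa only [epara, hf] using hedge i)
  obtain ⟨rfl, rfl, rfl⟩ := quadForm_eq_zero_of_cross2_ne_zero T.cross2_edge_ne_zero
    (by simpa using hQ 0) (by simpa using hQ 1) (by
      rw [← quadForm_neg, neg_add, neg_sub, neg_sub, sub_add_sub_cancel]
      simpa using hQ 2)
  convert IsPolyDeg.of_affine D E F using 2 with x
  simp [hf, quadForm]

end Triangle

def edgeBubble (T : Triangle) (c : Fin 3 → ℝ) (x : V2) : V2 :=
  ∑ k : Fin 3, (c k * (T.lam (k + 1) x * T.lam (k + 2) x)) • T.tang k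

section EdgeBubble

variable (T : Triangle) (c : Fin 3 → ℝ)

theorem edgeBubble_epara (i : Fin 3) (s : ℝ) :
    edgeBubble T c (epara T i s) = (c i * ((1 - s) * s)) • T.tang i := by
  simp only [edgeBubble, T.lam_mul_lam_epara, mul_ite, mul_zero, ite_smul, zero_smul,
    Finset.sum_ite_eq', Finset.mem_univ, if_true]

theorem edgeBubble_vertex (j : Fin 3) : edgeBubble T c (T.a j) = 0 := by
  rw [T.vertex_eq_epara, edgeBubble_epara]
  simp

theorem isVPolyDeg_edgeBubble : IsVPolyDeg 2 (edgeBubble T c) := by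
  have hcoeff (k : Fin 3) : IsPolyDeg 2 fun x => c k * (T.lam (k + 1) x * T.lam (k + 2) x) :=
    ((T.isPolyDeg_lam _).mul (T.isPolyDeg_lam _)).const_mul _
  constructor
  · simpa only [edgeBubble, Prod.fst_sum, Prod.smul_fst, smul_eq_mul] using
      IsPolyDeg.sum Finset.univ fun k _ => (hcoeff k).mul_const (T.tang k).1
  · simpa only [edgeBubble, Prod.snd_sum, Prod.smul_snd, smul_eq_mul] using
      IsPolyDeg.sum Finset.univ fun k _ => (hcoeff k).mul_const (T.tang k).2

end EdgeBubble

theorem exists_isVPolyDeg_one_add_edgeBubble {T : Triangle} {v : V2 → V2} (hv : memP2m T v) :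
    ∃ (p : V2 → V2) (c : Fin 3 → ℝ), IsVPolyDeg 1 p ∧ ∀ x, v x = p x + edgeBubble T c x := by
  obtain ⟨⟨hv1, hv2⟩, hnormal⟩ := hv
  have htang (i : Fin 3) : ∃ α β γ : ℝ, ∀ s,
      dot2 (v (epara T i s)) (T.tang i) = α + β * s + γ * s ^ 2 :=
    ((hv1.mul_const (T.tang i).1).add (hv2.mul_const (T.tang i).2)).exists_quadratic_seg _ _
  choose α β γ hγ using htang
  set w : V2 → V2 := fun x => v x - edgeBubble T (fun i => -γ i) x with hw
  refine ⟨w, fun i => -γ i, ?_, fun x => by simp [w]⟩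
  have hw_edge (i : Fin 3) : AffineOnUnitInterval (fun s => (w (epara T i s)).1) ∧
      AffineOnUnitInterval (fun s => (w (epara T i s)).2) := by
    refine T.affineOnUnitInterval_fst_and_snd i ?_ ⟨α i, β i + γ i, fun s _ => ?_⟩
    · obtain ⟨α', β', hnrm⟩ := hnormal i
      refine ⟨α', β', fun s hs => ?_⟩
      have horth := T.nrm_orth i
      simp only [hw, edgeBubble_epara, ← hnrm s hs, dot2, Prod.fst_sub, Prod.snd_sub,
        Prod.smul_fst, Prod.smul_snd, smul_eq_mul] at horth ⊢
      linear_combination γ i * ((1 - s) * s) * horth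
    · have hunit := dot2_self_eq_one (T.tang_unit i)
      simp only [hw, edgeBubble_epara, dot2, Prod.fst_sub, Prod.snd_sub,
        Prod.smul_fst, Prod.smul_snd, smul_eq_mul] at hunit hγ ⊢
      linear_combination hγ i s + γ i * ((1 - s) * s) * hunit
  exact ⟨T.isPolyDeg_one_of_affineOnUnitInterval_edges
      (hv1.sub (isVPolyDeg_edgeBubble T _).1) fun i => (hw_edge i).1,
    T.isPolyDeg_one_of_affineOnUnitInterval_edges
      (hv2.sub (isVPolyDeg_edgeBubble T _).2) fun i => (hw_edge i).2⟩

theorem memP2m_of_eq_add_edgeBubble {T : Triangle} {v p : V2 → V2} {c : Fin 3 → ℝ}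
    (hp : IsVPolyDeg 1 p) (hv : ∀ x, v x = p x + edgeBubble T c x) : memP2m T v := by
  obtain rfl : v = fun x => p x + edgeBubble T c x := funext hv
  refine ⟨⟨?_, ?_⟩, fun i => ?_⟩
  · simpa only [Prod.fst_add] using (hp.1.mono one_le_two).add (isVPolyDeg_edgeBubble T c).1
  · simpa only [Prod.snd_add] using (hp.2.mono one_le_two).add (isVPolyDeg_edgeBubble T c).2
  obtain ⟨α, β, hα⟩ := ((hp.1.mul_const (T.nrm i).1).add
    (hp.2.mul_const (T.nrm i).2)).exists_affine_seg (T.a (i + 1)) (T.a (i + 2))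
  refine ⟨α, β, fun s _ => ?_⟩
  have horth := T.nrm_orth i
  show dot2 (p (epara T i s) + edgeBubble T c (epara T i s)) (T.nrm i) = _
  rw [edgeBubble_epara]
  simp only [epara, dot2, Prod.fst_add, Prod.snd_add, Prod.smul_fst, Prod.smul_snd,
    smul_eq_mul] at horth hα ⊢
  linear_combination hα s + c i * ((1 - s) * s) * horth

theorem add_edgeBubble_inj {T : Triangle} {p p' : V2 → V2} {c c' : Fin 3 → ℝ}
    (hp : IsVPolyDeg 1 p) (hp' : IsVPolyDeg 1 p')
    (h : ∀ x, p x + edgeBubble T c x = p' x + edgeBubble T c' x) : p = p' ∧ c = c' := by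
  have hvertex (j : Fin 3) : p (T.a j) = p' (T.a j) := by
    simpa [edgeBubble_vertex] using h (T.a j)
  obtain rfl : p = p' := funext fun x => Prod.ext
    (congrFun (T.eq_of_isPolyDeg_one hp.1 hp'.1 fun j => congrArg Prod.fst (hvertex j)) x)
    (congrFun (T.eq_of_isPolyDeg_one hp.2 hp'.2 fun j => congrArg Prod.snd (hvertex j)) x)
  refine ⟨rfl, funext fun i => ?_⟩
  have hmid := add_left_cancel (h (epara T i (1 / 2)))
  rw [edgeBubble_epara, edgeBubble_epara] at hmid
  have := smul_left_injective ℝ (T.tang_ne_zero i) hmid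
  norm_num at this
  exact this

/-- The `∃!` says that the sum `P1(T)² ⊕ span{λ_{k+1} λ_{k+2} t_k}` is direct. -/
theorem stmt0 (T : Triangle) (v : V2 → V2) :
    memP2m T v ↔
      ∃! pc : (V2 → V2) × (Fin 3 → ℝ),
        IsVPolyDeg 1 pc.1 ∧
        ∀ x, v x = pc.1 x +
          ∑ k : Fin 3, (pc.2 k * (T.lam (k + 1) x * T.lam (k + 2) x)) • T.tang k := by
  constructor
  · intro hv
    obtain ⟨p, c, hp, hpc⟩ := exists_isVPolyDeg_one_add_edgeBubble hv
    refine ⟨(p, c), ⟨hp, hpc⟩, ?_⟩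
    rintro ⟨p', c'⟩ ⟨hp', hpc'⟩
    obtain ⟨rfl, rfl⟩ := add_edgeBubble_inj hp' hp fun x => (hpc' x).symm.trans (hpc x)
    rfl
  · rintro ⟨⟨p, c⟩, ⟨hp, hpc⟩, -⟩
    exact memP2m_of_eq_add_edgeBubble hp hpc
end
end

section
/- On a non-degenerate triangle T, the sequence R → P^{2+}(T) →(curl) P^{1+}(T) →(div) P0(T) is exact: curl has kernel the constants, its image is the divergence-free subspace of P^{1+}(T), and div maps P^{1+}(T) onto the constants. -/
open MeasureTheory
open scoped Classical

noncomputable section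

/-- Membership in `P^{2+}(T) := P2(T) ⊕ span{λ1 λ2 λ3}`. -/
def memP2p (T : Triangle) (w : V2 → ℝ) : Prop :=
  ∃ (p : V2 → ℝ) (c : ℝ), IsPolyDeg 2 p ∧
    ∀ x, w x = p x + c * (T.lam 0 x * T.lam 1 x * T.lam 2 x)

/-- Membership in `P^{1+}(T) := P1(T)² ⊕ span{curl(λ1 λ2 λ3)}`. -/
def memP1p (T : Triangle) (v : V2 → V2) : Prop :=
  ∃ (p : V2 → V2) (c : ℝ), IsVPolyDeg 1 p ∧
    ∀ x, v x = p x + c • curl2 (fun y => T.lam 0 y * T.lam 1 y * T.lam 2 y) x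

/-!
Functions in `P^{2+}(T)` are polynomials, and fields in `P^{1+}(T)` are affine fields plus the
curl of a polynomial, so everything reduces to calculus of real polynomials in two variables.
There `∂ₓ∂ᵧ = ∂ᵧ∂ₓ` gives `div ∘ curl = 0`, the divergence of the affine field
`(a₁ + b₁x + c₁y, a₂ + b₂x + c₂y)` is the constant `b₁ + c₂`, and when `b₁ + c₂ = 0` that field
is the curl of an explicit quadratic. Statements on `T` pass to and from the whole plane because
`T` is convex with nonempty interior: the mean value theorem gives the kernel of `curl`, and
identities on the interior extend to `T` by continuity.
-/

open MvPolynomial Filter Topology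

namespace MvPolynomial

theorem pderiv_comm {σ R : Type*} [CommRing R] (i j : σ) (p : MvPolynomial σ R) :
    pderiv i (pderiv j p) = pderiv j (pderiv i p) := by
  have h : ⁅pderiv (R := R) (σ := σ) i, pderiv (R := R) (σ := σ) j⁆ = 0 := by
    refine derivation_ext fun k => ?_
    classical
    simp only [Derivation.commutator_apply, pderiv_X]
    by_cases hjk : j = k <;> by_cases hik : i = k <;> simp [hjk, hik]
  simpa [Derivation.commutator_apply, sub_eq_zero] using congrArg (· p) h

theorem totalDegree_pderiv_le {σ R : Type*} [CommSemiring R] (i : σ) (p : MvPolynomial σ R) :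
    (pderiv i p).totalDegree ≤ p.totalDegree - 1 := by
  refine Finset.sup_le fun m hm => ?_
  have hm' : m + Finsupp.single i 1 ∈ p.support := by
    rw [mem_support_iff, coeff_pderiv] at hm
    exact mem_support_iff.2 (left_ne_zero_of_mul hm)
  have := le_totalDegree hm'
  rw [Finsupp.sum_add_index' (fun _ => rfl) (fun _ _ _ => rfl),
    Finsupp.sum_single_index rfl] at this
  omega

end MvPolynomial

theorem curl2_eq_zero_iff {f : V2 → ℝ} {x : V2} : curl2 f x = 0 ↔ fderiv ℝ f x = 0 := by
  refine ⟨fun h => ?_, fun h => by simp [curl2, pd1, pd2, h]⟩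
  simp only [curl2, pd1, pd2, Prod.mk_eq_zero, neg_eq_zero] at h
  refine ContinuousLinearMap.ext fun v => ?_
  have hv : v = v.1 • ((1 : ℝ), (0 : ℝ)) + v.2 • ((0 : ℝ), (1 : ℝ)) := by ext <;> simp
  rw [hv, map_add, map_smul, map_smul]
  simp [h.1, h.2]

theorem Convex.eq_of_curl2_eq_zero {s : Set V2} {f : V2 → ℝ} (hs : Convex ℝ s)
    (hf : Differentiable ℝ f) (h : ∀ x ∈ s, curl2 f x = 0) {x y : V2} (hx : x ∈ s) (hy : y ∈ s) :
    f x = f y := by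
  have := hs.norm_image_sub_le_of_norm_fderiv_le (C := 0) (fun z _ => hf z)
    (fun z hz => by simp [curl2_eq_zero_iff.1 (h z hz)]) hy hx
  simpa [sub_eq_zero] using this

theorem curl2_eq_zero_of_eqOn_const {s : Set V2} {w : V2 → ℝ} {c : ℝ}
    (hcont : Continuous (curl2 w)) (hw : ∀ x ∈ s, w x = c) :
    ∀ x ∈ closure (interior s), curl2 w x = 0 := by
  refine fun x hx => closure_minimal (fun y hy => ?_) (isClosed_eq hcont continuous_const) hx
  have hloc : w =ᶠ[𝓝 y] fun _ => c :=
    eventually_of_mem (isOpen_interior.mem_nhds hy) fun z hz => hw z (interior_subset hz)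
  exact curl2_eq_zero_iff.2 (by rw [hloc.fderiv_eq, fderiv_const_apply])

theorem Filter.EventuallyEq.div2_eq {v u : V2 → V2} {x : V2} (h : v =ᶠ[𝓝 x] u) :
    div2 v x = div2 u x := by
  have h1 : (fun y => (v y).1) =ᶠ[𝓝 x] fun y => (u y).1 := h.fun_comp Prod.fst
  have h2 : (fun y => (v y).2) =ᶠ[𝓝 x] fun y => (u y).2 := h.fun_comp Prod.snd
  simp only [div2, pd1, pd2, h1.fderiv_eq, h2.fderiv_eq]

-- `IsPolyDeg k f` says definitionally that `f = polyFn P` for some `P` of total degree `≤ k`.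
def polyFn (P : MvPolynomial (Fin 2) ℝ) (x : V2) : ℝ :=
  eval (fun i : Fin 2 => if i = 0 then x.1 else x.2) P

def polyField (P Q : MvPolynomial (Fin 2) ℝ) (x : V2) : V2 := (polyFn P x, polyFn Q x)

def affinePoly (a b c : ℝ) : MvPolynomial (Fin 2) ℝ := C a + C b * X 0 + C c * X 1

@[simp] theorem polyFn_affinePoly (a b c : ℝ) (x : V2) :
    polyFn (affinePoly a b c) x = a + b * x.1 + c * x.2 := by
  simp [polyFn, affinePoly]

@[simp] theorem pderiv_zero_affinePoly (a b c : ℝ) : pderiv 0 (affinePoly a b c) = C b := by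
  simp [affinePoly, pderiv_X]

@[simp] theorem pderiv_one_affinePoly (a b c : ℝ) : pderiv 1 (affinePoly a b c) = C c := by
  simp [affinePoly, pderiv_X]

theorem totalDegree_affinePoly_le (a b c : ℝ) : (affinePoly a b c).totalDegree ≤ 1 := by
  have hCX : ∀ (r : ℝ) (i : Fin 2), (C r * X i : MvPolynomial (Fin 2) ℝ).totalDegree ≤ 1 :=
    fun r i => (totalDegree_mul _ _).trans (by simp)
  exact (totalDegree_add _ _).trans <| max_le
    ((totalDegree_add _ _).trans (max_le (by simp) (hCX b 0))) (hCX c 1)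

theorem hasFDerivAt_polyFn (P : MvPolynomial (Fin 2) ℝ) (x : V2) :
    HasFDerivAt (polyFn P) (polyFn (pderiv 0 P) x • ContinuousLinearMap.fst ℝ ℝ ℝ +
      polyFn (pderiv 1 P) x • ContinuousLinearMap.snd ℝ ℝ ℝ) x := by
  induction P using MvPolynomial.induction_on with
  | C a =>
    have e : polyFn (C a) = fun _ => a := by ext; simp [polyFn]
    simpa [e, polyFn] using hasFDerivAt_const (𝕜 := ℝ) a x
  | add P Q hP hQ =>
    have e : polyFn (P + Q) = fun y => polyFn P y + polyFn Q y := by ext; simp [polyFn]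
    rw [e]
    refine (hP.fun_add hQ).congr_fderiv ?_
    ext <;> simp [polyFn]
  | mul_X P i hP =>
    obtain rfl | rfl : i = 0 ∨ i = 1 := by omega
    · have e : polyFn (P * X 0) = fun y => polyFn P y * y.1 := by ext; simp [polyFn]
      rw [e]
      refine (hP.fun_mul hasFDerivAt_fst).congr_fderiv ?_
      ext <;> simp [polyFn]
    · have e : polyFn (P * X 1) = fun y => polyFn P y * y.2 := by ext; simp [polyFn]
      rw [e]
      refine (hP.fun_mul hasFDerivAt_snd).congr_fderiv ?_
      ext <;> simp [polyFn]

theorem differentiable_polyFn (P : MvPolynomial (Fin 2) ℝ) : Differentiable ℝ (polyFn P) :=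
  fun x => (hasFDerivAt_polyFn P x).differentiableAt

theorem pd1_polyFn (P : MvPolynomial (Fin 2) ℝ) : pd1 (polyFn P) = polyFn (pderiv 0 P) := by
  ext x; simp [pd1, (hasFDerivAt_polyFn P x).fderiv]

theorem pd2_polyFn (P : MvPolynomial (Fin 2) ℝ) : pd2 (polyFn P) = polyFn (pderiv 1 P) := by
  ext x; simp [pd2, (hasFDerivAt_polyFn P x).fderiv]

theorem curl2_polyFn (W : MvPolynomial (Fin 2) ℝ) :
    curl2 (polyFn W) = polyField (pderiv 1 W) (-pderiv 0 W) := by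
  ext x <;> simp [curl2, polyField, pd1_polyFn, pd2_polyFn, polyFn]

theorem div2_polyField (P Q : MvPolynomial (Fin 2) ℝ) :
    div2 (polyField P Q) = polyFn (pderiv 0 P + pderiv 1 Q) := by
  ext x
  simp only [div2, polyField]
  rw [pd1_polyFn, pd2_polyFn]
  simp [polyFn]

theorem div2_curl2_polyFn (W : MvPolynomial (Fin 2) ℝ) : div2 (curl2 (polyFn W)) = 0 := by
  rw [curl2_polyFn, div2_polyField, map_neg, pderiv_comm 1 0, add_neg_cancel]
  ext x
  simp [polyFn]

theorem exists_polyFn_eq_affinePoly {P : MvPolynomial (Fin 2) ℝ} (hP : P.totalDegree ≤ 1) :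
    ∃ a b c : ℝ, polyFn P = polyFn (affinePoly a b c) := by
  have hconst : ∀ i, ∃ b, pderiv i P = C b := fun i =>
    ⟨_, totalDegree_eq_zero_iff_eq_C.1 (by have := totalDegree_pderiv_le i P; omega)⟩
  obtain ⟨b, hb⟩ := hconst 0
  obtain ⟨c, hc⟩ := hconst 1
  set R := P - affinePoly 0 b c
  have hR : ∀ x, fderiv ℝ (polyFn R) x = 0 := fun x => by
    rw [(hasFDerivAt_polyFn R x).fderiv]
    simp [R, hb, hc, polyFn]
  refine ⟨polyFn R 0, b, c, funext fun x => ?_⟩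
  have hRx : polyFn R x = polyFn P x - (b * x.1 + c * x.2) := by simp [R, polyFn, affinePoly]
  rw [polyFn_affinePoly, ← is_const_of_fderiv_eq_zero (differentiable_polyFn R) hR x 0, hRx]
  ring

theorem polyField_add (P Q P' Q' : MvPolynomial (Fin 2) ℝ) :
    polyField P Q + polyField P' Q' = polyField (P + P') (Q + Q') := by
  ext x <;> simp [polyField, polyFn]

theorem curl2_polyFn_add (P Q : MvPolynomial (Fin 2) ℝ) :
    curl2 (polyFn (P + Q)) = curl2 (polyFn P) + curl2 (polyFn Q) := by
  simp only [curl2_polyFn, polyField_add, map_add, neg_add]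

theorem curl2_polyFn_C_mul (c : ℝ) (P : MvPolynomial (Fin 2) ℝ) :
    curl2 (polyFn (C c * P)) = c • curl2 (polyFn P) := by
  ext x <;> simp [curl2_polyFn, polyField, polyFn]

theorem isVPolyDeg_polyField {k : ℕ} {P Q : MvPolynomial (Fin 2) ℝ} (hP : P.totalDegree ≤ k)
    (hQ : Q.totalDegree ≤ k) : IsVPolyDeg k (polyField P Q) :=
  ⟨⟨P, hP, fun _ => rfl⟩, ⟨Q, hQ, fun _ => rfl⟩⟩

theorem div2_polyField_affinePoly_add_curl2 (a₁ b₁ c₁ a₂ b₂ c₂ : ℝ)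
    (Q : MvPolynomial (Fin 2) ℝ) :
    div2 (polyField (affinePoly a₁ b₁ c₁) (affinePoly a₂ b₂ c₂) + curl2 (polyFn Q)) =
      fun _ => b₁ + c₂ := by
  rw [curl2_polyFn, polyField_add, div2_polyField]
  ext x
  simp [pderiv_comm (1 : Fin 2) 0 Q, polyFn]
  ring

theorem exists_curl2_eq_polyField_affinePoly {a₁ b₁ c₁ a₂ b₂ c₂ : ℝ} (h : b₁ + c₂ = 0) :
    ∃ Q : MvPolynomial (Fin 2) ℝ, Q.totalDegree ≤ 2 ∧
      curl2 (polyFn Q) = polyField (affinePoly a₁ b₁ c₁) (affinePoly a₂ b₂ c₂) := by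
  refine ⟨X 1 * affinePoly a₁ b₁ (c₁ / 2) - X 0 * affinePoly a₂ (b₂ / 2) 0, ?_, ?_⟩
  · have hXA : ∀ i a b c, (X i * affinePoly a b c).totalDegree ≤ 2 := fun i a b c =>
      (totalDegree_mul _ _).trans (by have := totalDegree_affinePoly_le a b c; simp; omega)
    exact (totalDegree_sub _ _).trans (max_le (hXA _ _ _ _) (hXA _ _ _ _))
  · rw [curl2_polyFn]
    ext x <;> simp [polyField, polyFn, affinePoly, pderiv_X]
    · ring
    · linear_combination -x.2 * h

def lamPoly (T : Triangle) (i : Fin 3) : MvPolynomial (Fin 2) ℝ :=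
  affinePoly (T.lam i 0) (T.lam i (1, 0) - T.lam i 0) (T.lam i (0, 1) - T.lam i 0)

def bubblePoly (T : Triangle) : MvPolynomial (Fin 2) ℝ := lamPoly T 0 * lamPoly T 1 * lamPoly T 2

theorem polyFn_lamPoly (T : Triangle) (i : Fin 3) : polyFn (lamPoly T i) = T.lam i := by
  obtain ⟨L, c, hL⟩ := T.lam_affine i
  ext x
  have hLx : L x = x.1 * L (1, 0) + x.2 * L (0, 1) := by
    rw [← smul_eq_mul, ← smul_eq_mul, ← map_smul, ← map_smul, ← map_add]
    simp
  simp only [lamPoly, polyFn_affinePoly, hL, hLx, map_zero]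
  ring

theorem polyFn_bubblePoly (T : Triangle) :
    polyFn (bubblePoly T) = fun y => T.lam 0 y * T.lam 1 y * T.lam 2 y := by
  simp only [← polyFn_lamPoly T]
  ext y
  simp [bubblePoly, polyFn]

theorem memP2p.exists_eq {T : Triangle} {w : V2 → ℝ} (hw : memP2p T w) :
    ∃ (P : MvPolynomial (Fin 2) ℝ) (c : ℝ), P.totalDegree ≤ 2 ∧
      w = polyFn (P + C c * bubblePoly T) := by
  obtain ⟨p, c, ⟨P, hP, hpP⟩, hwp⟩ := hw
  refine ⟨P, c, hP, funext fun x => ?_⟩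
  rw [hwp x, hpP x, ← congrFun (polyFn_bubblePoly T) x]
  simp [polyFn]

theorem memP1p.exists_eq {T : Triangle} {v : V2 → V2} (hv : memP1p T v) :
    ∃ a₁ b₁ c₁ a₂ b₂ c₂ c : ℝ, v = polyField (affinePoly a₁ b₁ c₁) (affinePoly a₂ b₂ c₂) +
      curl2 (polyFn (C c * bubblePoly T)) := by
  obtain ⟨p, c, ⟨⟨P₁, hP₁, hp₁⟩, ⟨P₂, hP₂, hp₂⟩⟩, hvp⟩ := hv
  obtain ⟨a₁, b₁, c₁, h₁⟩ := exists_polyFn_eq_affinePoly hP₁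
  obtain ⟨a₂, b₂, c₂, h₂⟩ := exists_polyFn_eq_affinePoly hP₂
  have e₁ (x : V2) : (p x).1 = polyFn (affinePoly a₁ b₁ c₁) x := (hp₁ x).trans (congrFun h₁ x)
  have e₂ (x : V2) : (p x).2 = polyFn (affinePoly a₂ b₂ c₂) x := (hp₂ x).trans (congrFun h₂ x)
  refine ⟨a₁, b₁, c₁, a₂, b₂, c₂, c, funext fun x => ?_⟩
  rw [hvp x, curl2_polyFn_C_mul, polyFn_bubblePoly]
  ext <;> simp only [Pi.add_apply, Pi.smul_apply, Prod.fst_add, Prod.snd_add, polyField, e₁, e₂]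

theorem interior_triSet_nonempty (T : Triangle) : (interior (triSet T)).Nonempty := by
  rw [triSet, interior_convexHull_nonempty_iff_affineSpan_eq_top,
    T.indep.affineSpan_eq_top_iff_card_eq_finrank_add_one]
  simp

theorem triSet_subset_closure_interior (T : Triangle) :
    triSet T ⊆ closure (interior (triSet T)) := by
  have hconv : Convex ℝ (triSet T) := convex_convexHull ℝ _
  rw [hconv.closure_interior_eq_closure_of_nonempty_interior (interior_triSet_nonempty T)]
  exact subset_closure

theorem memP2p.memP1p_curl2 {T : Triangle} {w : V2 → ℝ} (hw : memP2p T w) :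
    memP1p T (curl2 w) := by
  obtain ⟨P, c, hP, rfl⟩ := hw.exists_eq
  refine ⟨polyField (pderiv 1 P) (-pderiv 0 P), c, isVPolyDeg_polyField ?_ ?_, fun x => ?_⟩
  · have := totalDegree_pderiv_le 1 P; omega
  · have := totalDegree_pderiv_le 0 P; rw [totalDegree_neg]; omega
  · rw [curl2_polyFn_add, curl2_polyFn_C_mul, polyFn_bubblePoly, curl2_polyFn]; rfl

theorem memP2p.curl2_eq_zero_iff {T : Triangle} {w : V2 → ℝ} (hw : memP2p T w) :
    (∀ x ∈ triSet T, curl2 w x = 0) ↔ ∃ c : ℝ, ∀ x ∈ triSet T, w x = c := by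
  obtain ⟨P, b, -, rfl⟩ := hw.exists_eq
  constructor
  · intro h
    obtain ⟨x₀, hx₀⟩ := interior_triSet_nonempty T
    exact ⟨_, fun x hx => (convex_convexHull ℝ _).eq_of_curl2_eq_zero
      (differentiable_polyFn _) h hx (interior_subset hx₀)⟩
  · rintro ⟨c, hc⟩ x hx
    have hcont : Continuous (curl2 (polyFn (P + C b * bubblePoly T))) := by
      rw [curl2_polyFn]
      exact (differentiable_polyFn _).continuous.prodMk (differentiable_polyFn _).continuous
    exact curl2_eq_zero_of_eqOn_const hcont hc x (triSet_subset_closure_interior T hx)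

theorem memP1p.exists_div2_eq_const {T : Triangle} {v : V2 → V2} (hv : memP1p T v) :
    ∃ d : ℝ, ∀ x, div2 v x = d := by
  obtain ⟨a₁, b₁, c₁, a₂, b₂, c₂, c, rfl⟩ := hv.exists_eq
  exact ⟨b₁ + c₂, fun x => by rw [div2_polyField_affinePoly_add_curl2]⟩

theorem memP1p.div2_eq_zero_iff {T : Triangle} {v : V2 → V2} (hv : memP1p T v) :
    (∀ x ∈ triSet T, div2 v x = 0) ↔ ∃ w, memP2p T w ∧ ∀ x ∈ triSet T, v x = curl2 w x := by
  obtain ⟨x₀, hx₀⟩ := interior_triSet_nonempty T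
  constructor
  · obtain ⟨a₁, b₁, c₁, a₂, b₂, c₂, c, rfl⟩ := hv.exists_eq
    intro h
    have hdiv : b₁ + c₂ = 0 := by
      simpa [div2_polyField_affinePoly_add_curl2] using h x₀ (interior_subset hx₀)
    obtain ⟨Q, hQ, hcurl⟩ := exists_curl2_eq_polyField_affinePoly (a₁ := a₁) (a₂ := a₂) hdiv
    refine ⟨polyFn (Q + C c * bubblePoly T), ⟨polyFn Q, c, ⟨Q, hQ, fun _ => rfl⟩, fun x => ?_⟩,
      fun x _ => by rw [curl2_polyFn_add, hcurl]⟩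
    rw [← congrFun (polyFn_bubblePoly T) x]
    simp [polyFn]
  · rintro ⟨w, hw, hvw⟩ x -
    obtain ⟨d, hd⟩ := hv.exists_div2_eq_const
    obtain ⟨P, c, -, rfl⟩ := hw.exists_eq
    have hloc : v =ᶠ[𝓝 x₀] curl2 (polyFn (P + C c * bubblePoly T)) :=
      eventually_of_mem (isOpen_interior.mem_nhds hx₀) fun y hy => hvw y (interior_subset hy)
    rw [hd, ← hd x₀, hloc.div2_eq, div2_curl2_polyFn, Pi.zero_apply]

theorem exists_memP1p_div2_eq (T : Triangle) (c : ℝ) :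
    ∃ v, memP1p T v ∧ ∀ x, div2 v x = c := by
  refine ⟨polyField (affinePoly 0 c 0) (affinePoly 0 0 0),
    ⟨_, 0, isVPolyDeg_polyField (totalDegree_affinePoly_le _ _ _)
      (totalDegree_affinePoly_le _ _ _), fun x => by rw [zero_smul, add_zero]⟩, fun x => ?_⟩
  simp [div2_polyField, polyFn]

/-- exactness of `ℝ → P^{2+}(T) --curl--> P^{1+}(T) --div--> P0(T)`:
curl maps `P^{2+}` into `P^{1+}` with kernel the constants, its image is the
divergence-free subspace of `P^{1+}(T)`, and div maps `P^{1+}(T)` onto the constants. -/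
theorem stmt3 (T : Triangle) :
    (∀ w, memP2p T w → memP1p T (curl2 w)) ∧
    (∀ w, memP2p T w →
      ((∀ x ∈ triSet T, curl2 w x = 0) ↔ ∃ c : ℝ, ∀ x ∈ triSet T, w x = c)) ∧
    (∀ v, memP1p T v →
      ((∀ x ∈ triSet T, div2 v x = 0) ↔
        ∃ w, memP2p T w ∧ ∀ x ∈ triSet T, v x = curl2 w x)) ∧
    (∀ v, memP1p T v → ∃ c : ℝ, ∀ x ∈ triSet T, div2 v x = c) ∧
    (∀ c : ℝ, ∃ v, memP1p T v ∧ ∀ x ∈ triSet T, div2 v x = c) :=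
  ⟨fun _ hw => hw.memP1p_curl2, fun _ hw => hw.curl2_eq_zero_iff,
    fun _ hv => hv.div2_eq_zero_iff,
    fun _ hv => hv.exists_div2_eq_const.imp fun _ hd x _ => hd x,
    fun c => (exists_memP1p_div2_eq T c).imp fun _ hv => ⟨hv.1, fun x _ => hv.2 x⟩⟩
end
end

section
/- On a non-degenerate triangle T of area S, with edge e_i of length d_i opposite vertex a_i, the function y_{T,e_j,e_k} := −(2/d_i) λ_i n_i satisfies div y_{T,e_j,e_k} = 1/S, where n_i is the unit outward normal of edge e_i. -/
open MeasureTheory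
open scoped Classical

noncomputable section

/-- `y_{T,e_j,e_k} := −(2/d_i) λ_i n_i` (indexed by the remaining index `i`). -/
def yEE (T : Triangle) (i : Fin 3) : V2 → V2 :=
  fun x => (-(2 / elen T i) * T.lam i x) • T.nrm i

/-!
Since `λ_i` is affine, `div (λ_i n_i) = ∇λ_i · n_i`. The gradient `∇λ_i` annihilates the tangent of
`e_i` (where `λ_i` vanishes) and rises by `1` from `e_i` to `a_i`; decomposing `a_i - a_{i+1}` in the
orthonormal frame `(n_i, t_i)` gives `∇λ_i · n_i = 1 / (n_i · (a_i - a_{i+1})) = -1 / h_i`, with `h_i`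
the height on `e_i`. As `2S = d_i h_i`, `div y = (2 / d_i) / h_i = 1 / S`.
-/

lemma div2_smul_const {φ : V2 → ℝ} {x : V2} (hφ : DifferentiableAt ℝ φ x) (v : V2) :
    div2 (fun y => φ y • v) x = fderiv ℝ φ x v := by
  have hv : v = v.1 • ((1 : ℝ), (0 : ℝ)) + v.2 • ((0 : ℝ), (1 : ℝ)) := by ext <;> simp
  simp only [div2, pd1, pd2, Prod.smul_fst, Prod.smul_snd, smul_eq_mul, fderiv_mul_const hφ]
  conv_rhs => rw [hv, map_add, map_smul, map_smul]
  simp only [smul_apply, smul_eq_mul]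

lemma enorm2_eq_one_iff {u : V2} : enorm2 u = 1 ↔ u.1 ^ 2 + u.2 ^ 2 = 1 := Real.sqrt_eq_one

lemma enorm2_smul (c : ℝ) (u : V2) : enorm2 (c • u) = |c| * enorm2 u := by
  rw [enorm2, enorm2, ← Real.sqrt_sq_eq_abs, ← Real.sqrt_mul (sq_nonneg c)]
  congr 1
  simp only [Prod.smul_fst, Prod.smul_snd, smul_eq_mul]
  ring

lemma eq_rot_of_orthonormal {n t : V2} (hn : enorm2 n = 1) (ht : enorm2 t = 1)
    (hnt : dot2 n t = 0) (hpos : 0 < cross2 n t) : n = (t.2, -t.1) := by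
  rw [enorm2_eq_one_iff] at hn ht
  simp only [dot2, cross2] at hnt hpos
  have hsq : (n.1 * t.2 - n.2 * t.1) ^ 2 = 1 := by nlinarith
  have hcross : n.1 * t.2 - n.2 * t.1 = 1 := by
    nlinarith [sq_nonneg (n.1 * t.2 - n.2 * t.1 - 1), sq_nonneg (n.1 * t.2 - n.2 * t.1 + 1)]
  ext
  · linear_combination t.1 * hnt + t.2 * hcross - n.1 * ht
  · linear_combination t.2 * hnt - t.1 * hcross - n.2 * ht

lemma eq_dot2_rot_smul_add_dot2_smul {t : V2} (ht : enorm2 t = 1) (w : V2) :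
    w = dot2 (t.2, -t.1) w • (t.2, -t.1) + dot2 t w • t := by
  rw [enorm2_eq_one_iff] at ht
  ext <;> simp only [dot2, Prod.fst_add, Prod.snd_add, Prod.smul_fst, Prod.smul_snd, smul_eq_mul]
  · linear_combination -w.1 * ht
  · linear_combination -w.2 * ht

lemma cross2_smul_right_eq_dot2_rot (w t : V2) (c : ℝ) :
    cross2 w (c • t) = c * dot2 (t.2, -t.1) w := by
  simp only [cross2, dot2, Prod.smul_fst, Prod.smul_snd, smul_eq_mul]
  ring

lemma cross2_sub_sub (p q r : V2) : cross2 (q - p) (r - p) = -cross2 (p - q) (r - q) := by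
  simp only [cross2, Prod.fst_sub, Prod.snd_sub]
  ring

namespace Triangle

variable (T : Triangle) (i : Fin 3)

lemma exists_lam_eq : ∃ (D : V2 →L[ℝ] ℝ) (c : ℝ), T.lam i = fun y => D y + c := by
  obtain ⟨L, c, hL⟩ := T.lam_affine i
  exact ⟨LinearMap.toContinuousLinearMap L, c, funext hL⟩

lemma differentiable_lam : Differentiable ℝ (T.lam i) := by
  obtain ⟨D, c, h⟩ := T.exists_lam_eq i
  rw [h]
  fun_prop

lemma fderiv_lam_sub (x p q : V2) :
    fderiv ℝ (T.lam i) x (p - q) = T.lam i p - T.lam i q := by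
  obtain ⟨D, c, h⟩ := T.exists_lam_eq i
  rw [h, fderiv_add_const, D.fderiv, map_sub]
  ring

lemma nrm_eq_rot_tang : T.nrm i = ((T.tang i).2, -(T.tang i).1) :=
  eq_rot_of_orthonormal (T.nrm_unit i) (T.tang_unit i) (T.nrm_orth i) (T.orient i)

lemma exists_edge_eq_smul_tang : ∃ c : ℝ, c ≠ 0 ∧ T.a (i + 2) - T.a (i + 1) = c • T.tang i := by
  obtain ⟨c, hc⟩ := T.tang_parallel i
  refine ⟨c, ?_, hc⟩
  rintro rfl
  rw [zero_smul, sub_eq_zero] at hc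
  exact T.indep.injective.ne (by fin_cases i <;> decide) hc

lemma elen_pos : 0 < elen T i := by
  obtain ⟨c, hc0, hc⟩ := T.exists_edge_eq_smul_tang i
  rw [elen, hc, enorm2_smul, T.tang_unit, mul_one]
  exact abs_pos.mpr hc0

lemma fderiv_lam_tang (x : V2) : fderiv ℝ (T.lam i) x (T.tang i) = 0 := by
  obtain ⟨c, hc0, hc⟩ := T.exists_edge_eq_smul_tang i
  have hne1 : i ≠ i + 1 := by fin_cases i <;> decide
  have hne2 : i ≠ i + 2 := by fin_cases i <;> decide
  have hedge : c * fderiv ℝ (T.lam i) x (T.tang i) = 0 := by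
    rw [← smul_eq_mul, ← map_smul, ← hc, fderiv_lam_sub, T.lam_apply, T.lam_apply,
      if_neg hne1, if_neg hne2, sub_zero]
  exact (mul_eq_zero.mp hedge).resolve_left hc0

lemma fderiv_lam_nrm_mul_dot2 (x : V2) :
    fderiv ℝ (T.lam i) x (T.nrm i) * dot2 (T.nrm i) (T.a i - T.a (i + 1)) = 1 := by
  have hne : i ≠ i + 1 := by fin_cases i <;> decide
  have hrise : fderiv ℝ (T.lam i) x (T.a i - T.a (i + 1)) = 1 := by
    rw [fderiv_lam_sub, T.lam_apply, T.lam_apply, if_pos rfl, if_neg hne, sub_zero]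
  rw [eq_dot2_rot_smul_add_dot2_smul (T.tang_unit i) (T.a i - T.a (i + 1)), map_add, map_smul,
    map_smul, fderiv_lam_tang, ← T.nrm_eq_rot_tang] at hrise
  simpa [mul_comm] using hrise

lemma areaT_eq_abs_cross2 :
    areaT T = |cross2 (T.a (i + 1) - T.a i) (T.a (i + 2) - T.a i)| / 2 := by
  rw [areaT]
  congr 2
  obtain rfl | rfl | rfl : i = 0 ∨ i = 1 ∨ i = 2 := by fin_cases i <;> simp
  all_goals simp only [cross2, Prod.fst_sub, Prod.snd_sub, Fin.isValue, Fin.reduceAdd, zero_add]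
  all_goals ring

lemma two_mul_areaT : 2 * areaT T = elen T i * -dot2 (T.nrm i) (T.a i - T.a (i + 1)) := by
  obtain ⟨c, hc⟩ := T.tang_parallel i
  have hout := T.nrm_outward i
  rw [areaT_eq_abs_cross2 T i, cross2_sub_sub, abs_neg, hc, cross2_smul_right_eq_dot2_rot,
    ← T.nrm_eq_rot_tang, abs_mul, abs_of_neg hout, elen, hc, enorm2_smul, T.tang_unit]
  ring

end Triangle

/-- `div y_{T,e_j,e_k} = 1/S` where `S` is the area of `T`. -/
theorem stmt5 (T : Triangle) (i : Fin 3) :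
    ∀ x : V2, div2 (yEE T i) x = 1 / areaT T := by
  intro x
  have hdiv : div2 (yEE T i) x = -(2 / elen T i) * fderiv ℝ (T.lam i) x (T.nrm i) := by
    unfold yEE
    rw [div2_smul_const ((T.differentiable_lam i x).const_mul _),
      fderiv_const_mul (T.differentiable_lam i x)]
    rfl
  have hgrad := T.fderiv_lam_nrm_mul_dot2 i x
  have harea := T.two_mul_areaT i
  have hheight : dot2 (T.nrm i) (T.a i - T.a (i + 1)) ≠ 0 := right_ne_zero_of_mul_eq_one hgrad
  have hlen := (T.elen_pos i).ne'
  rw [hdiv, show areaT T = elen T i * -dot2 (T.nrm i) (T.a i - T.a (i + 1)) / 2 by linarith]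
  field_simp
  linear_combination -hgrad
end
end

section
/- The sBDFM element is unisolvent: for a non-degenerate triangle T, a function v ∈ P^{2-}(T) is uniquely determined by the nine functionals {mean value over e_i of v·n_i, mean value over e_i of v·n_i (λ_j − λ_k), mean value over e_i of v·t_i}, i = 1,2,3; equivalently, if all nine functionals vanish on v then v = 0. -/
/-!
The moments of the affine function `v·nᵢ` on `eᵢ` against `1` and `λᵢ₊₁ - λᵢ₊₂` vanish, so
`v·nᵢ = 0` on `eᵢ`. At a vertex `v` is then orthogonal to two non-parallel normals, so it vanishes
there; along `eᵢ` the quadratic `v·tᵢ` thus vanishes at both endpoints and has mean zero, hence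
vanishes identically. So `v = 0` on `∂T`, and each component of `v`, a quadratic vanishing at the
vertices and edge midpoints of `T`, is zero on `T`.
-/

open MeasureTheory
open scoped Classical

noncomputable section

/-- sBDFM nodal functional: mean over edge `e i` of `v·n_i`. -/
def fN0 (T : Triangle) (i : Fin 3) (v : V2 → V2) : ℝ :=
  ∫ s in (0:ℝ)..1, dot2 (v (epara T i s)) (T.nrm i)

/-- sBDFM nodal functional: mean over edge `e i` of `v·n_i (λ_{i+1} − λ_{i+2})`. -/
def fN1 (T : Triangle) (i : Fin 3) (v : V2 → V2) : ℝ :=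
  ∫ s in (0:ℝ)..1,
    dot2 (v (epara T i s)) (T.nrm i) *
      (T.lam (i + 1) (epara T i s) - T.lam (i + 2) (epara T i s))

/-- sBDFM nodal functional: mean over edge `e i` of `v·t_i`. -/
def fT0 (T : Triangle) (i : Fin 3) (v : V2 → V2) : ℝ :=
  ∫ s in (0:ℝ)..1, dot2 (v (epara T i s)) (T.tang i)

def IsQuadratic (f : V2 → ℝ) : Prop :=
  ∃ A B C D E G : ℝ, ∀ x : V2,
    f x = A + B * x.1 + C * x.2 + D * x.1 ^ 2 + E * (x.1 * x.2) + G * x.2 ^ 2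

namespace IsQuadratic

variable {f g : V2 → ℝ}

theorem zero : IsQuadratic (fun _ => 0) := ⟨0, 0, 0, 0, 0, 0, fun _ => by simp⟩

theorem add (hf : IsQuadratic f) (hg : IsQuadratic g) : IsQuadratic (f + g) := by
  obtain ⟨A, B, C, D, E, G, hf⟩ := hf
  obtain ⟨A', B', C', D', E', G', hg⟩ := hg
  exact ⟨A + A', B + B', C + C', D + D', E + E', G + G', fun x => by
    simp only [Pi.add_apply, hf, hg]; ring⟩

theorem const_mul (c : ℝ) (hf : IsQuadratic f) : IsQuadratic (fun x => c * f x) := by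
  obtain ⟨A, B, C, D, E, G, hf⟩ := hf
  exact ⟨c * A, c * B, c * C, c * D, c * E, c * G, fun x => by simp only [hf]; ring⟩

theorem sum {ι : Type*} (s : Finset ι) {f : ι → V2 → ℝ} (hf : ∀ i ∈ s, IsQuadratic (f i)) :
    IsQuadratic (fun x => ∑ i ∈ s, f i x) := by
  classical
  induction s using Finset.induction_on with
  | empty => simpa using zero
  | insert i s hi ih =>
    simp_rw [Finset.sum_insert hi]
    exact (hf i (s.mem_insert_self i)).add (ih fun j hj => hf j (Finset.mem_insert_of_mem hj))

theorem monomial {i j : ℕ} (hij : i + j ≤ 2) : IsQuadratic (fun x => x.1 ^ i * x.2 ^ j) := by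
  have hcases : (i = 0 ∧ j = 0) ∨ (i = 1 ∧ j = 0) ∨ (i = 0 ∧ j = 1) ∨
      (i = 2 ∧ j = 0) ∨ (i = 1 ∧ j = 1) ∨ (i = 0 ∧ j = 2) := by omega
  rcases hcases with ⟨rfl, rfl⟩ | ⟨rfl, rfl⟩ | ⟨rfl, rfl⟩ | ⟨rfl, rfl⟩ | ⟨rfl, rfl⟩ | ⟨rfl, rfl⟩
  · exact ⟨1, 0, 0, 0, 0, 0, fun x => by ring⟩
  · exact ⟨0, 1, 0, 0, 0, 0, fun x => by ring⟩
  · exact ⟨0, 0, 1, 0, 0, 0, fun x => by ring⟩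
  · exact ⟨0, 0, 0, 1, 0, 0, fun x => by ring⟩
  · exact ⟨0, 0, 0, 0, 1, 0, fun x => by ring⟩
  · exact ⟨0, 0, 0, 0, 0, 1, fun x => by ring⟩

theorem comp_affine (hf : IsQuadratic f) (p q r : V2) :
    IsQuadratic (fun y => f (p + y.1 • q + y.2 • r)) := by
  obtain ⟨A, B, C, D, E, G, hf⟩ := hf
  refine ⟨A + B * p.1 + C * p.2 + D * p.1 ^ 2 + E * (p.1 * p.2) + G * p.2 ^ 2,
    B * q.1 + C * q.2 + 2 * D * p.1 * q.1 + E * (p.1 * q.2 + p.2 * q.1) + 2 * G * p.2 * q.2,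
    B * r.1 + C * r.2 + 2 * D * p.1 * r.1 + E * (p.1 * r.2 + p.2 * r.1) + 2 * G * p.2 * r.2,
    D * q.1 ^ 2 + E * (q.1 * q.2) + G * q.2 ^ 2,
    2 * D * q.1 * r.1 + E * (q.1 * r.2 + q.2 * r.1) + 2 * G * q.2 * r.2,
    D * r.1 ^ 2 + E * (r.1 * r.2) + G * r.2 ^ 2, fun y => ?_⟩
  simp only [hf, Prod.fst_add, Prod.snd_add, Prod.smul_fst, Prod.smul_snd, smul_eq_mul]
  ring

theorem exists_eq_along_line (hf : IsQuadratic f) (p q : V2) :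
    ∃ a b c : ℝ, ∀ s : ℝ, f (p + s • q) = a + b * s + c * s ^ 2 := by
  obtain ⟨A, B, C, D, E, G, hf⟩ := hf
  refine ⟨A + B * p.1 + C * p.2 + D * p.1 ^ 2 + E * (p.1 * p.2) + G * p.2 ^ 2,
    B * q.1 + C * q.2 + 2 * D * p.1 * q.1 + E * (p.1 * q.2 + p.2 * q.1) + 2 * G * p.2 * q.2,
    D * q.1 ^ 2 + E * (q.1 * q.2) + G * q.2 ^ 2, fun s => ?_⟩
  simp only [hf, Prod.fst_add, Prod.snd_add, Prod.smul_fst, Prod.smul_snd, smul_eq_mul]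
  ring

/-- A quadratic is determined by its values at the vertices and edge midpoints. -/
theorem eq_zero_of_eq_zero_on_boundary (hf : IsQuadratic f)
    (h₁ : ∀ s ∈ Set.Icc (0 : ℝ) 1, f (s, 0) = 0) (h₂ : ∀ s ∈ Set.Icc (0 : ℝ) 1, f (0, s) = 0)
    (h₃ : ∀ s ∈ Set.Icc (0 : ℝ) 1, f (1 - s, s) = 0) (y : V2) : f y = 0 := by
  obtain ⟨A, B, C, D, E, G, hf⟩ := hf
  have e₁ := h₁ 0 (by norm_num)
  have e₂ := h₁ (1 / 2) (by norm_num)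
  have e₃ := h₁ 1 (by norm_num)
  have e₄ := h₂ (1 / 2) (by norm_num)
  have e₅ := h₂ 1 (by norm_num)
  have e₆ := h₃ (1 / 2) (by norm_num)
  simp only [hf] at e₁ e₂ e₃ e₄ e₅ e₆
  norm_num at e₁ e₂ e₃ e₄ e₅ e₆
  have hA : A = 0 := e₁
  have hB : B = 0 := by linarith
  have hC : C = 0 := by linarith
  have hD : D = 0 := by linarith
  have hE : E = 0 := by linarith
  have hG : G = 0 := by linarith
  simp [hf, hA, hB, hC, hD, hE, hG]

end IsQuadratic

theorem IsPolyDeg.isQuadratic {f : V2 → ℝ} (hf : IsPolyDeg 2 f) : IsQuadratic f := by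
  obtain ⟨p, hp, hf⟩ := hf
  rw [funext hf]
  simp only [MvPolynomial.eval_eq', Fin.prod_univ_two, Fin.isValue, ↓reduceIte, one_ne_zero]
  refine IsQuadratic.sum _ fun d hd => IsQuadratic.const_mul _ (IsQuadratic.monomial ?_)
  have := (MvPolynomial.le_totalDegree hd).trans hp
  rwa [Finsupp.sum_fintype _ _ (fun _ => rfl), Fin.sum_univ_two] at this

theorem IsVPolyDeg.isQuadratic_dot2 {v : V2 → V2} (hv : IsVPolyDeg 2 v) (n : V2) :
    IsQuadratic (fun x => dot2 (v x) n) := by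
  convert (hv.1.isQuadratic.const_mul n.1).add (hv.2.isQuadratic.const_mul n.2) using 1
  funext x
  simp only [dot2, Pi.add_apply]
  ring

theorem integral_unitInterval_quadratic (a b c : ℝ) :
    ∫ s in (0 : ℝ)..1, (a + b * s + c * s ^ 2) = a + b / 2 + c / 3 := by
  have hF : ∀ s ∈ Set.uIcc (0 : ℝ) 1,
      HasDerivAt (fun s => a * s + b / 2 * s ^ 2 + c / 3 * s ^ 3) (a + b * s + c * s ^ 2) s :=
    fun s _ => ((((hasDerivAt_id' s).const_mul a).add ((hasDerivAt_pow 2 s).const_mul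
      (b / 2))).add ((hasDerivAt_pow 3 s).const_mul (c / 3))).congr_deriv (by norm_num; ring)
  rw [intervalIntegral.integral_eq_sub_of_hasDerivAt hF
    ((by fun_prop : Continuous _).intervalIntegrable _ _)]
  ring

theorem integral_unitInterval_of_eqOn_quadratic {g : ℝ → ℝ} {a b c : ℝ}
    (h : ∀ s ∈ Set.Icc (0 : ℝ) 1, g s = a + b * s + c * s ^ 2) :
    ∫ s in (0 : ℝ)..1, g s = a + b / 2 + c / 3 := by
  rw [intervalIntegral.integral_congr fun s hs =>
    h s (by rwa [Set.uIcc_of_le zero_le_one] at hs)]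
  exact integral_unitInterval_quadratic a b c

theorem eq_zero_of_quadratic_of_integral_eq_zero {g : ℝ → ℝ} {a b c : ℝ}
    (hg : ∀ s, g s = a + b * s + c * s ^ 2) (h₀ : g 0 = 0) (h₁ : g 1 = 0)
    (hint : ∫ s in (0 : ℝ)..1, g s = 0) (s : ℝ) : g s = 0 := by
  rw [integral_unitInterval_of_eqOn_quadratic fun s _ => hg s] at hint
  rw [hg] at h₀ h₁ ⊢
  norm_num at h₀ h₁
  have hc : c = 0 := by linarith
  have hb : b = 0 := by linarith
  simp [h₀, hb, hc]

theorem eq_zero_of_dot2_eq_zero {n m x : V2} (hnm : cross2 n m ≠ 0) (hn : dot2 x n = 0)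
    (hm : dot2 x m = 0) : x = 0 := by
  simp only [dot2] at hn hm
  have h₁ : cross2 n m * x.1 = 0 := by
    simp only [cross2]; linear_combination m.2 * hn - n.2 * hm
  have h₂ : cross2 n m * x.2 = 0 := by
    simp only [cross2]; linear_combination n.1 * hm - m.1 * hn
  exact Prod.ext ((mul_eq_zero.mp h₁).resolve_left hnm) ((mul_eq_zero.mp h₂).resolve_left hnm)

theorem dot2_eq_zero_of_cross2_eq_zero {n m x : V2} (hnm : cross2 n m = 0) (hm : m ≠ 0)
    (hx : dot2 m x = 0) : dot2 n x = 0 := by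
  simp only [dot2, cross2] at hx hnm ⊢
  have h₁ : m.1 * (n.1 * x.1 + n.2 * x.2) = 0 := by linear_combination n.1 * hx - x.2 * hnm
  have h₂ : m.2 * (n.1 * x.1 + n.2 * x.2) = 0 := by linear_combination n.2 * hx + x.1 * hnm
  by_contra hne
  exact hm (Prod.ext ((mul_eq_zero.mp h₁).resolve_right hne)
    ((mul_eq_zero.mp h₂).resolve_right hne))

namespace Triangle

variable (T : Triangle)

theorem nrm_ne_zero (i : Fin 3) : T.nrm i ≠ 0 := by
  intro h
  have := T.nrm_unit i
  simp [h, enorm2] at this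

theorem dot2_nrm_edge (i : Fin 3) : dot2 (T.nrm i) (T.a (i + 2) - T.a (i + 1)) = 0 := by
  obtain ⟨c, hc⟩ := T.tang_parallel i
  have := T.nrm_orth i
  simp only [hc, dot2, Prod.smul_fst, Prod.smul_snd, smul_eq_mul] at this ⊢
  linear_combination c * this

/-- Otherwise the outward normal of `e i` would be orthogonal to `a i - a (i + 1)`. -/
theorem cross2_nrm_succ_ne_zero (i : Fin 3) : cross2 (T.nrm i) (T.nrm (i + 1)) ≠ 0 := by
  have hidx : ∀ i : Fin 3, i + 1 + 2 = i ∧ i + 1 + 1 = i + 2 := by decide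
  intro h
  have hedge := T.dot2_nrm_edge (i + 1)
  rw [(hidx i).1, (hidx i).2] at hedge
  have h₁ := dot2_eq_zero_of_cross2_eq_zero h (T.nrm_ne_zero (i + 1)) hedge
  have h₂ := T.dot2_nrm_edge i
  have := T.nrm_outward i
  simp only [dot2, Prod.fst_sub, Prod.snd_sub] at h₁ h₂ this
  linarith

theorem lam_epara (i j : Fin 3) (s : ℝ) :
    T.lam j (epara T i s) = (1 - s) * T.lam j (T.a (i + 1)) + s * T.lam j (T.a (i + 2)) := by
  obtain ⟨L, c, hL⟩ := T.lam_affine j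
  simp only [hL, epara, seg, map_add, map_smul, map_sub, smul_eq_mul]
  ring

theorem lam_sub_lam_epara (i : Fin 3) (s : ℝ) :
    T.lam (i + 1) (epara T i s) - T.lam (i + 2) (epara T i s) = 1 - 2 * s := by
  have hne : ∀ i : Fin 3, i + 1 ≠ i + 2 := by decide
  simp only [lam_epara, lam_apply, hne i, (hne i).symm, if_true, if_false]
  ring

def refMap (y : V2) : V2 := T.a 0 + y.1 • (T.a 1 - T.a 0) + y.2 • (T.a 2 - T.a 0)

theorem triSet_subset_range_refMap : triSet T ⊆ Set.range T.refMap := by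
  refine convexHull_min ?_ ?_
  · rintro _ ⟨j, rfl⟩
    fin_cases j
    exacts [⟨(0, 0), by simp [refMap]⟩, ⟨(1, 0), by simp [refMap]⟩, ⟨(0, 1), by simp [refMap]⟩]
  · rintro _ ⟨y, rfl⟩ _ ⟨y', rfl⟩ a b - - hab
    refine ⟨a • y + b • y', ?_⟩
    simp only [refMap, Prod.fst_add, Prod.snd_add, Prod.smul_fst, Prod.smul_snd, smul_eq_mul]
    linear_combination (norm := module) -(hab • T.a 0)

theorem eq_zero_on_triSet_of_isQuadratic {f : V2 → ℝ} (hf : IsQuadratic f)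
    (h : ∀ i, ∀ s ∈ Set.Icc (0 : ℝ) 1, f (epara T i s) = 0) : ∀ x ∈ triSet T, f x = 0 := by
  have hidx : (2 : Fin 3) + 1 = 0 ∧ (2 : Fin 3) + 2 = 1 ∧ (1 : Fin 3) + 1 = 2 ∧
      (1 : Fin 3) + 2 = 0 ∧ (0 : Fin 3) + 1 = 1 ∧ (0 : Fin 3) + 2 = 2 := by decide
  have hg := hf.comp_affine (T.a 0) (T.a 1 - T.a 0) (T.a 2 - T.a 0)
  have hzero := hg.eq_zero_of_eq_zero_on_boundary
    (fun s hs => by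
      convert h 2 s hs using 2
      simp only [epara, seg, hidx]
      module)
    (fun s hs => by
      convert h 1 (1 - s) ⟨by linarith [hs.2], by linarith [hs.1]⟩ using 2
      simp only [epara, seg, hidx]
      module)
    (fun s hs => by
      convert h 0 s hs using 2
      simp only [epara, seg, hidx]
      module)
  rintro x hx
  obtain ⟨y, rfl⟩ := T.triSet_subset_range_refMap hx
  exact hzero y

end Triangle

section ElementFunctionals

variable {T : Triangle} {v : V2 → V2}

theorem dot2_nrm_eq_zero_on_edge {i : Fin 3} (hN : NormalP1 T v) (h₀ : fN0 T i v = 0)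
    (h₁ : fN1 T i v = 0) : ∀ s ∈ Set.Icc (0 : ℝ) 1, dot2 (v (epara T i s)) (T.nrm i) = 0 := by
  obtain ⟨α, β, hαβ⟩ := hN i
  rw [fN0, integral_unitInterval_of_eqOn_quadratic (a := α) (b := β) (c := 0)
    fun s hs => by rw [hαβ s hs]; ring] at h₀
  rw [fN1, integral_unitInterval_of_eqOn_quadratic (a := α) (b := β - 2 * α) (c := -2 * β)
    fun s hs => by rw [hαβ s hs, T.lam_sub_lam_epara]; ring] at h₁
  have hβ : β = 0 := by linarith
  have hα : α = 0 := by linarith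
  intro s hs
  rw [hαβ s hs, hα, hβ]
  ring

/-- The vertex `a j` is the common endpoint of `e (j + 1)` and `e (j + 2)`, whose normals span
the plane. -/
theorem eq_zero_at_vertex
    (h : ∀ i, ∀ s ∈ Set.Icc (0 : ℝ) 1, dot2 (v (epara T i s)) (T.nrm i) = 0) (j : Fin 3) :
    v (T.a j) = 0 := by
  have hidx : ∀ j : Fin 3, j + 1 + 2 = j ∧ j + 2 + 1 = j ∧ j + 1 + 1 = j + 2 := by decide
  have h₁ := h (j + 1) 1 (by norm_num)
  have h₂ := h (j + 2) 0 (by norm_num)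
  simp only [epara, seg, (hidx j).1, (hidx j).2.1, zero_smul, one_smul, add_zero,
    add_sub_cancel] at h₁ h₂
  have hcross := T.cross2_nrm_succ_ne_zero (j + 1)
  rw [(hidx j).2.2] at hcross
  exact eq_zero_of_dot2_eq_zero hcross h₁ h₂

theorem eq_zero_on_edge {i : Fin 3} (hv : IsVPolyDeg 2 v)
    (hn : ∀ s ∈ Set.Icc (0 : ℝ) 1, dot2 (v (epara T i s)) (T.nrm i) = 0)
    (ha : ∀ j, v (T.a j) = 0) (ht : fT0 T i v = 0) :
    ∀ s ∈ Set.Icc (0 : ℝ) 1, v (epara T i s) = 0 := by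
  obtain ⟨a, b, c, habc⟩ :=
    (hv.isQuadratic_dot2 (T.tang i)).exists_eq_along_line (T.a (i + 1)) (T.a (i + 2) - T.a (i + 1))
  have htang := eq_zero_of_quadratic_of_integral_eq_zero
    (g := fun s => dot2 (v (epara T i s)) (T.tang i)) habc
    (by simp [epara, seg, ha, dot2]) (by simp [epara, seg, ha, dot2]) ht
  exact fun s hs => eq_zero_of_dot2_eq_zero (T.orient i).ne' (hn s hs) (htang s)

end ElementFunctionals

/-- unisolvence of the sBDFM element: if all nine nodal functionals
vanish on `v ∈ P^{2-}(T)`, then `v = 0` on `T`. -/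
theorem stmt7 (T : Triangle) (v : V2 → V2) (hv : memP2m T v)
    (h : ∀ i : Fin 3, fN0 T i v = 0 ∧ fN1 T i v = 0 ∧ fT0 T i v = 0) :
    ∀ x ∈ triSet T, v x = 0 := by
  obtain ⟨hquad, hN⟩ := hv
  have hnormal i := dot2_nrm_eq_zero_on_edge hN (h i).1 (h i).2.1
  have hvertex := eq_zero_at_vertex hnormal
  have hedge i := eq_zero_on_edge hquad (hnormal i) hvertex (h i).2.2
  intro x hx
  ext
  · exact T.eq_zero_on_triSet_of_isQuadratic hquad.1.isQuadratic
      (fun i s hs => by rw [hedge i s hs]; rfl) x hx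
  · exact T.eq_zero_on_triSet_of_isQuadratic hquad.2.isQuadratic
      (fun i s hs => by rw [hedge i s hs]; rfl) x hx
end
end

section
/- For a planar triangulation of a simply connected polygonal domain, with X^i the interior vertices, T^i the interior cells (triangles all of whose edges are interior), E^i the interior edges, and T all cells, if every boundary vertex is connected by an edge to an interior vertex then #T^i = 2·#X^i − 2, and consequently #X^i + #T^i = 3·#X^i − 2 = 3·#E^i − (3·#T − 1). -/
open scoped Classical

noncomputable section

/-- An abstract (combinatorial) model of a triangulation of a simply connected
polygonal domain in the plane: vertices `Fin nX`, edges `Fin nE` (each with two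
endpoints), triangular cells `Fin nC` (each with three sides), together with the
designated boundary vertices and boundary edges, and the standard facts valid for
such triangulations: Euler's formula `#X − #E + #C = 1`, the boundary is a cycle
(`#X^b = #E^b`), endpoints of boundary edges are boundary vertices, every boundary
edge lies in exactly one cell and every interior edge in exactly two, any two sides
of a cell share a vertex, and the fan property at a boundary vertex: if a single
cell contains two boundary edges through a boundary vertex `v`, then all edges
through `v` are boundary edges. -/
structure CombTriangulation where
  nX : ℕ
  nE : ℕ
  nC : ℕ
  ends : Fin nE → Finset (Fin nX)
  sides : Fin nC → Finset (Fin nE)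
  bdV : Finset (Fin nX)
  bdE : Finset (Fin nE)
  ends_card : ∀ e, (ends e).card = 2
  sides_card : ∀ c, (sides c).card = 3
  sides_inj : Function.Injective sides
  bdE_sub : ∀ e ∈ bdE, ends e ⊆ bdV
  euler : (nX : ℤ) - (nE : ℤ) + (nC : ℤ) = 1
  bd_count : bdV.card = bdE.card
  bd_in_one : ∀ e ∈ bdE, ∃! c : Fin nC, e ∈ sides c
  int_in_two : ∀ e : Fin nE, e ∉ bdE →
    (Finset.univ.filter fun c : Fin nC => e ∈ sides c).card = 2
  sides_share : ∀ c, ∀ e₁ ∈ sides c, ∀ e₂ ∈ sides c, e₁ ≠ e₂ →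
    (ends e₁ ∩ ends e₂).Nonempty
  fan : ∀ v ∈ bdV, ∀ c : Fin nC,
    2 ≤ ((sides c).filter fun e => e ∈ bdE ∧ v ∈ ends e).card →
    ∀ e : Fin nE, v ∈ ends e → e ∈ bdE

namespace CombTriangulation

variable (M : CombTriangulation)

/-- interior vertices `X^i` -/
def intV : Finset (Fin M.nX) := Finset.univ \ M.bdV

/-- interior edges `E^i` -/
def intE : Finset (Fin M.nE) := Finset.univ \ M.bdE

/-- interior cells `T^i`: cells all of whose edges are interior -/
def intC : Finset (Fin M.nC) :=
  Finset.univ.filter fun c => ∀ e ∈ M.sides c, e ∉ M.bdE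

end CombTriangulation

/-!
Counting the incidences between edges and cells gives `3 #T = #E^b + 2 #E^i`. Under the
hypothesis no cell has two boundary sides: they would meet at a boundary vertex, all of whose
edges are then boundary edges by the fan property. Hence each non-interior cell has exactly one
boundary side, and counting the boundary incidences from both ends gives `#T = #T^i + #E^b`.
Euler's formula and `#X^b = #E^b` then leave only linear arithmetic.
-/

namespace CombTriangulation

open Finset

variable (M : CombTriangulation)

lemma mem_intE {e : Fin M.nE} : e ∈ M.intE ↔ e ∉ M.bdE := by
  simp [intE]

def cellsOf (e : Fin M.nE) : Finset (Fin M.nC) := {c | e ∈ M.sides c}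

lemma card_cellsOf_of_mem_bdE {e : Fin M.nE} (he : e ∈ M.bdE) : #(M.cellsOf e) = 1 := by
  obtain ⟨c, hc, huniq⟩ := M.bd_in_one e he
  exact card_eq_one.2 ⟨c, eq_singleton_iff_unique_mem.2
    ⟨by simpa [cellsOf] using hc, fun c' hc' => huniq c' (by simpa [cellsOf] using hc')⟩⟩

lemma card_cellsOf_of_notMem_bdE {e : Fin M.nE} (he : e ∉ M.bdE) : #(M.cellsOf e) = 2 :=
  M.int_in_two e he

lemma sum_card_sides_inter (S : Finset (Fin M.nE)) :
    ∑ c, #(M.sides c ∩ S) = ∑ e ∈ S, #(M.cellsOf e) := by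
  have := sum_card_bipartiteAbove_eq_sum_card_bipartiteBelow
    (s := univ) (t := S) (r := fun c e => e ∈ M.sides c)
  simpa only [bipartiteAbove, bipartiteBelow, cellsOf, filter_mem_eq_inter, inter_comm S]
    using this

lemma three_mul_nC : 3 * M.nC = #M.bdE + 2 * #M.intE := by
  have hsides : ∑ c, #(M.sides c ∩ univ) = 3 * M.nC := by
    simp [M.sides_card, mul_comm]
  have hbd : ∑ e ∈ M.bdE, #(M.cellsOf e) = #M.bdE := by
    rw [sum_congr rfl fun e he => M.card_cellsOf_of_mem_bdE he, card_eq_sum_ones]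
  have hint : ∑ e ∈ M.intE, #(M.cellsOf e) = 2 * #M.intE := by
    rw [sum_congr rfl fun e he => M.card_cellsOf_of_notMem_bdE (M.mem_intE.1 he), sum_const,
      smul_eq_mul, mul_comm]
  rw [← hsides, sum_card_sides_inter, ← sum_sdiff (subset_univ M.bdE), ← hbd, ← hint, add_comm]
  rfl

lemma card_intV_add_card_bdV : #M.intV + #M.bdV = M.nX := by
  simpa [intV] using card_sdiff_add_card_eq_card (subset_univ M.bdV)

lemma card_intE_add_card_bdE : #M.intE + #M.bdE = M.nE := by
  simpa [intE] using card_sdiff_add_card_eq_card (subset_univ M.bdE)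

lemma mem_intC_iff {c : Fin M.nC} : c ∈ M.intC ↔ M.sides c ∩ M.bdE = ∅ := by
  simp [intC, eq_empty_iff_forall_notMem]

lemma card_intC_add_card_bdE (h : ∀ c, #(M.sides c ∩ M.bdE) ≤ 1) :
    #M.intC + #M.bdE = M.nC := by
  have hbd : ∑ c, #(M.sides c ∩ M.bdE) = #M.bdE := by
    rw [sum_card_sides_inter, sum_congr rfl fun e he => M.card_cellsOf_of_mem_bdE he,
      card_eq_sum_ones]
  have hnon : ∑ c, #(M.sides c ∩ M.bdE) = #(univ \ M.intC) := by
    have hone : ∀ c ∈ univ \ M.intC, #(M.sides c ∩ M.bdE) = 1 := fun c hc =>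
      le_antisymm (h c) (one_le_card.2 (nonempty_iff_ne_empty.2 fun he =>
        (mem_sdiff.1 hc).2 (M.mem_intC_iff.2 he)))
    have hzero : ∀ c ∈ M.intC, #(M.sides c ∩ M.bdE) = 0 := fun c hc =>
      card_eq_zero.2 (M.mem_intC_iff.1 hc)
    rw [← sum_sdiff (subset_univ M.intC), sum_congr rfl hone, sum_congr rfl hzero,
      sum_const_zero, add_zero, card_eq_sum_ones]
  rw [← hbd, hnon, add_comm]
  simpa using card_sdiff_add_card_eq_card (subset_univ M.intC)

lemma card_sides_inter_bdE_le_one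
    (h : ∀ v ∈ M.bdV, ∃ e : Fin M.nE, v ∈ M.ends e ∧ ∃ w ∈ M.ends e, w ∉ M.bdV)
    (c : Fin M.nC) : #(M.sides c ∩ M.bdE) ≤ 1 := by
  refine card_le_one.2 fun e₁ he₁ e₂ he₂ => by_contra fun hne => ?_
  rw [mem_inter] at he₁ he₂
  obtain ⟨v, hv⟩ := M.sides_share c e₁ he₁.1 e₂ he₂.1 hne
  rw [mem_inter] at hv
  have hvb : v ∈ M.bdV := M.bdE_sub e₁ he₁.2 hv.1
  have htwo : 2 ≤ #((M.sides c).filter fun e => e ∈ M.bdE ∧ v ∈ M.ends e) := by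
    rw [← card_pair hne]
    refine card_le_card fun e he => ?_
    rcases mem_insert.1 he with rfl | he
    · exact mem_filter.2 ⟨he₁.1, he₁.2, hv.1⟩
    · rw [mem_singleton.1 he]
      exact mem_filter.2 ⟨he₂.1, he₂.2, hv.2⟩
  obtain ⟨e, hve, w, hwe, hw⟩ := h v hvb
  exact hw (M.bdE_sub e (M.fan v hvb c htwo e hve) hwe)

end CombTriangulation

/-- if every boundary vertex is connected by an edge to an interior
vertex, then `#T^i = 2 #X^i − 2`, and consequently
`#X^i + #T^i = 3 #X^i − 2 = 3 #E^i − (3 #T − 1)`. -/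
theorem stmt11 (M : CombTriangulation)
    (h : ∀ v ∈ M.bdV, ∃ e : Fin M.nE, v ∈ M.ends e ∧ ∃ w ∈ M.ends e, w ∉ M.bdV) :
    ((M.intC.card : ℤ) = 2 * (M.intV.card : ℤ) - 2) ∧
    ((M.intV.card : ℤ) + (M.intC.card : ℤ) = 3 * (M.intV.card : ℤ) - 2) ∧
    (3 * (M.intV.card : ℤ) - 2 = 3 * (M.intE.card : ℤ) - (3 * (M.nC : ℤ) - 1)) := by
  have hC := M.card_intC_add_card_bdE (M.card_sides_inter_bdE_le_one h)
  have hV := M.card_intV_add_card_bdV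
  have hE := M.card_intE_add_card_bdE
  have hinc := M.three_mul_nC
  have heuler := M.euler
  have hbd := M.bd_count
  omega
end
end
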